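/- Let S be a finite set of states and A a finite set of actions. Fix a deterministic transition function B : S × A → S, a cost function C : S × A → ℝ with 0 ≤ C(s,a) ≤ 1 for all s, a, an initial state s₀ ∈ S, and a time horizon T ≥ 1. A (stochastic) policy is a map π : S → PMF A, and a deterministic expert is a map a* : S → A (viewed as the policy assigning probability 1 to a*(s) in state s). For a policy π, define the state distribution d_π^t ∈ PMF S at step t (1 ≤ t ≤ T) recursively by d_π^1 = δ_{s₀} and d_π^{t+1}(s') = Σ_{s,a} d_π^t(s) · π(s)(a) · 1[B(s,a) = s'], and define the global cost J(π) = (1/T) Σ_{t=1}^T E_{s ∼ d_π^t}[ E_{a ∼ π(s)}[C(s,a)] ]. Suppose π̂ is a policy whose average expected 0-1 loss against the expert under the expert's own state distributions satisfies (1/T) Σ_{t=1}^T E_{s ∼ d_{π*}^t}[ 1 − π̂(s)(a*(s)) ] ≤ ε. Then J(π̂) ≤ J(π*) + T² · ε, where J(π*) is the global cost of the expert policy. -/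

import Mathlib

open scoped BigOperators

/-- The state distribution `d_π^{t+1}` (indexed from 0, so index `t` corresponds to
the paper's time step `t+1`) of a learner following stochastic policy `π` in the MDP
with deterministic transition function `B`, starting from initial state `s₀`:
`d_π^1 = δ_{s₀}` and `d_π^{t+1}(s') = Σ_{s,a} d_π^t(s) · π(s)(a) · 1[B(s,a) = s']`. -/
noncomputable def stateDist {S A : Type*} [Fintype S] [Fintype A] [DecidableEq S]
    (B : S → A → S) (π : S → PMF A) (s₀ : S) : ℕ → S → ℝ
  | 0, s => if s = s₀ then 1 else 0
  | (t + 1), s' =>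
      ∑ s : S, ∑ a : A,
        stateDist B π s₀ t s * (π s a).toReal * (if B s a = s' then 1 else 0)

/-- The global cost `J(π) = (1/T) Σ_{t=1}^T E_{s ∼ d_π^t}[ E_{a ∼ π(s)}[C(s,a)] ]`. -/
noncomputable def globalCost {S A : Type*} [Fintype S] [Fintype A] [DecidableEq S]
    (B : S → A → S) (C : S → A → ℝ) (π : S → PMF A) (s₀ : S) (T : ℕ) : ℝ :=
  (1 / T : ℝ) * ∑ t ∈ Finset.range T, ∑ s : S,
    stateDist B π s₀ t s * ∑ a : A, (π s a).toReal * C s a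

/-!
Let `s*_t` be the expert's deterministic trajectory and `e_t = 1 - π̂(s*_t)(a*(s*_t))` the
learner's 0-1 loss there, so the loss hypothesis says `(1/T) Σ_t e_t ≤ ε`. The learner
follows the expert's action at step `u` with probability `1 - e_u`, so it is still on the
expert's trajectory at step `t` with probability at least `∏_{u<t} (1 - e_u) ≥ 1 - Σ_{u<t} e_u`.
On the trajectory its expected cost exceeds the expert's by at most `e_t`, and off it every
step costs at most `1`; hence step `t` costs at most the expert's plus `Σ_{u≤t} e_u`.
Summing over `t < T` gives `J(π̂) ≤ J(π*) + T ε`, and `T ε ≤ T² ε`.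
-/

open Finset

theorem PMF.toReal_le_one {α : Type*} (p : PMF α) (a : α) : (p a).toReal ≤ 1 :=
  ENNReal.toReal_le_of_le_ofReal zero_le_one (by simpa using p.coe_le_one a)

theorem PMF.sum_toReal_eq_one {α : Type*} [Fintype α] (p : PMF α) : ∑ a, (p a).toReal = 1 := by
  rw [← ENNReal.toReal_sum fun a _ => p.apply_ne_top a, ← tsum_fintype (L := .unconditional _),
    p.tsum_coe, ENNReal.toReal_one]

theorem Finset.sum_mul_le_add_one_sub {ι : Type*} [Fintype ι] {d c : ι → ℝ}
    (hd : ∀ i, 0 ≤ d i) (hd1 : ∑ i, d i = 1) {x : ι} (hc : ∀ i, c i ≤ c x + 1) :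
    ∑ i, d i * c i ≤ c x + (1 - d x) := by
  classical
  have hdev : ∀ i, d i * (c i - c x) ≤ d i - if i = x then d i else 0 := by
    intro i
    split_ifs with hi
    · simp [hi]
    · simpa using mul_le_of_le_one_right (hd i) (by linarith [hc i])
  calc ∑ i, d i * c i = c x + ∑ i, d i * (c i - c x) := by
        simp only [mul_sub, sum_sub_distrib, ← sum_mul, hd1]; ring
    _ ≤ c x + ∑ i, (d i - if i = x then d i else 0) := by gcongr with i; exact hdev i
    _ = c x + (1 - d x) := by simp [sum_sub_distrib, hd1]

theorem Finset.sum_range_sum_range_succ_le {e : ℕ → ℝ} (he : ∀ u, 0 ≤ e u) (T : ℕ) :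
    ∑ t ∈ range T, ∑ u ∈ range (t + 1), e u ≤ T * ∑ u ∈ range T, e u :=
  calc ∑ t ∈ range T, ∑ u ∈ range (t + 1), e u
      ≤ ∑ t ∈ range T, ∑ u ∈ range T, e u :=
        sum_le_sum fun t ht => sum_le_sum_of_subset_of_nonneg
          (range_subset_range.2 (mem_range.1 ht)) fun u _ _ => he u
    _ = T * ∑ u ∈ range T, e u := by simp

def trajectory {S A : Type*} (B : S → A → S) (f : S → A) (s₀ : S) : ℕ → S
  | 0 => s₀
  | t + 1 => B (trajectory B f s₀ t) (f (trajectory B f s₀ t))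

def zeroOneLoss {S A : Type*} (πhat : S → PMF A) (astar : S → A) (s : S) : ℝ :=
  1 - (πhat s (astar s)).toReal

theorem zeroOneLoss_nonneg {S A : Type*} (πhat : S → PMF A) (astar : S → A) (s : S) :
    0 ≤ zeroOneLoss πhat astar s :=
  sub_nonneg.2 (PMF.toReal_le_one _ _)

section

variable {S A : Type*} [Fintype S] [Fintype A] [DecidableEq S] (B : S → A → S)

theorem stateDist_nonneg (π : S → PMF A) (s₀ : S) : ∀ t s, 0 ≤ stateDist B π s₀ t s
  | 0, s => by rw [stateDist]; positivity
  | t + 1, s' => by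
    rw [stateDist]
    refine sum_nonneg fun s _ => sum_nonneg fun a _ => ?_
    have := stateDist_nonneg π s₀ t s
    positivity

theorem sum_stateDist (π : S → PMF A) (s₀ : S) : ∀ t, ∑ s, stateDist B π s₀ t s = 1
  | 0 => by simp [stateDist]
  | t + 1 => by
    simp only [stateDist]
    rw [sum_comm]
    simp [sum_comm (γ := S), ← mul_sum, PMF.sum_toReal_eq_one, sum_stateDist π s₀ t]

theorem stateDist_pure (f : S → A) (s₀ : S) :
    ∀ t s, stateDist B (fun s => PMF.pure (f s)) s₀ t s =
      if s = trajectory B f s₀ t then 1 else 0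
  | 0, s => by rw [stateDist]; rfl
  | t + 1, s' => by
    classical
    simp only [stateDist, stateDist_pure f s₀ t, PMF.pure_apply, apply_ite ENNReal.toReal,
      ENNReal.toReal_one, ENNReal.toReal_zero, ite_mul, one_mul, zero_mul]
    simp [trajectory, sum_ite_eq', eq_comm]
    -- the two sides differ only in their `Decidable` instances
    congr

theorem sum_stateDist_pure_mul (f : S → A) (s₀ : S) (g : S → ℝ) (t : ℕ) :
    ∑ s, stateDist B (fun s => PMF.pure (f s)) s₀ t s * g s = g (trajectory B f s₀ t) := by
  simp [stateDist_pure]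

theorem mul_le_stateDist_succ (π : S → PMF A) (s₀ : S) (t : ℕ) (s : S) (a : A) :
    stateDist B π s₀ t s * (π s a).toReal ≤ stateDist B π s₀ (t + 1) (B s a) := by
  set flow : S → A → ℝ := fun s' a' =>
    stateDist B π s₀ t s' * (π s' a').toReal * if B s' a' = B s a then 1 else 0
  have hflow : ∀ s' a', 0 ≤ flow s' a' := fun s' a' => by
    have := stateDist_nonneg B π s₀ t s'
    positivity
  calc stateDist B π s₀ t s * (π s a).toReal = flow s a := by simp [flow]
    _ ≤ ∑ a', flow s a' := single_le_sum (fun a' _ => hflow s a') (mem_univ a)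
    _ ≤ ∑ s', ∑ a', flow s' a' :=
        single_le_sum (f := fun s' => ∑ a', flow s' a')
          (fun s' _ => sum_nonneg fun a' _ => hflow s' a') (mem_univ s)
    _ = stateDist B π s₀ (t + 1) (B s a) := by rw [stateDist]

theorem one_sub_sum_zeroOneLoss_le_stateDist (πhat : S → PMF A) (astar : S → A) (s₀ : S) :
    ∀ t, 1 - ∑ u ∈ range t, zeroOneLoss πhat astar (trajectory B astar s₀ u) ≤
      stateDist B πhat s₀ t (trajectory B astar s₀ t)
  | 0 => by simp [stateDist, trajectory]
  | t + 1 => by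
    have ih := one_sub_sum_zeroOneLoss_le_stateDist πhat astar s₀ t
    have hE := sum_nonneg fun u (_ : u ∈ range t) =>
      zeroOneLoss_nonneg πhat astar (trajectory B astar s₀ u)
    set x := trajectory B astar s₀ t
    have hp0 : 0 ≤ (πhat x (astar x)).toReal := ENNReal.toReal_nonneg
    have hp1 := PMF.toReal_le_one (πhat x) (astar x)
    have hstay : stateDist B πhat s₀ t x * (πhat x (astar x)).toReal ≤
        stateDist B πhat s₀ (t + 1) (trajectory B astar s₀ (t + 1)) :=
      mul_le_stateDist_succ B πhat s₀ t x (astar x)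
    rw [sum_range_succ, zeroOneLoss]
    nlinarith [mul_le_mul_of_nonneg_right ih hp0]

noncomputable def stepCost (C : S → A → ℝ) (π : S → PMF A) (s₀ : S) (t : ℕ) : ℝ :=
  ∑ s, stateDist B π s₀ t s * ∑ a, (π s a).toReal * C s a

theorem globalCost_eq_sum_stepCost (C : S → A → ℝ) (π : S → PMF A) (s₀ : S) (T : ℕ) :
    globalCost B C π s₀ T = 1 / T * ∑ t ∈ range T, stepCost B C π s₀ t :=
  rfl

theorem stepCost_pure (C : S → A → ℝ) (f : S → A) (s₀ : S) (t : ℕ) :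
    stepCost B C (fun s => PMF.pure (f s)) s₀ t =
      C (trajectory B f s₀ t) (f (trajectory B f s₀ t)) := by
  classical
  simp [stepCost, sum_stateDist_pure_mul, PMF.pure_apply, apply_ite ENNReal.toReal, ite_mul]

theorem stepCost_le {C : S → A → ℝ} (hC0 : ∀ s a, 0 ≤ C s a) (hC1 : ∀ s a, C s a ≤ 1)
    (πhat : S → PMF A) (astar : S → A) (s₀ : S) (t : ℕ) :
    stepCost B C πhat s₀ t ≤ C (trajectory B astar s₀ t) (astar (trajectory B astar s₀ t)) +
      ∑ u ∈ range (t + 1), zeroOneLoss πhat astar (trajectory B astar s₀ u) := by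
  set x := trajectory B astar s₀ t
  set c : S → ℝ := fun s => ∑ a, (πhat s a).toReal * C s a
  have hc0 : 0 ≤ c x := sum_nonneg fun a _ => mul_nonneg ENNReal.toReal_nonneg (hC0 x a)
  have hc1 : ∀ s, c s ≤ 1 := fun s =>
    calc c s ≤ ∑ a, (πhat s a).toReal :=
          sum_le_sum fun a _ => mul_le_of_le_one_right ENNReal.toReal_nonneg (hC1 s a)
      _ = 1 := PMF.sum_toReal_eq_one _
  have hon : c x ≤ C x (astar x) + zeroOneLoss πhat astar x :=
    sum_mul_le_add_one_sub (fun a => ENNReal.toReal_nonneg) (PMF.sum_toReal_eq_one _)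
      fun a => by linarith [hC1 x a, hC0 x (astar x)]
  have hoff : stepCost B C πhat s₀ t ≤ c x + (1 - stateDist B πhat s₀ t x) :=
    sum_mul_le_add_one_sub (stateDist_nonneg B πhat s₀ t) (sum_stateDist B πhat s₀ t)
      fun s => by linarith [hc1 s]
  have hstay := one_sub_sum_zeroOneLoss_le_stateDist B πhat astar s₀ t
  rw [sum_range_succ]
  linarith

noncomputable def imitationLoss (πhat : S → PMF A) (astar : S → A) (s₀ : S) (T : ℕ) : ℝ :=
  1 / T * ∑ t ∈ range T, ∑ s,
    stateDist B (fun s => PMF.pure (astar s)) s₀ t s * zeroOneLoss πhat astar s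

theorem imitationLoss_eq (πhat : S → PMF A) (astar : S → A) (s₀ : S) (T : ℕ) :
    imitationLoss B πhat astar s₀ T =
      1 / T * ∑ t ∈ range T, zeroOneLoss πhat astar (trajectory B astar s₀ t) := by
  simp only [imitationLoss, sum_stateDist_pure_mul]

theorem imitationLoss_nonneg (πhat : S → PMF A) (astar : S → A) (s₀ : S) (T : ℕ) :
    0 ≤ imitationLoss B πhat astar s₀ T := by
  rw [imitationLoss_eq]
  exact mul_nonneg (by positivity) (sum_nonneg fun t _ => zeroOneLoss_nonneg _ _ _)

theorem globalCost_le_globalCost_pure_add {C : S → A → ℝ} (hC0 : ∀ s a, 0 ≤ C s a)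
    (hC1 : ∀ s a, C s a ≤ 1) (πhat : S → PMF A) (astar : S → A) (s₀ : S) (T : ℕ) :
    globalCost B C πhat s₀ T ≤ globalCost B C (fun s => PMF.pure (astar s)) s₀ T +
      T * imitationLoss B πhat astar s₀ T := by
  set πstar : S → PMF A := fun s => PMF.pure (astar s)
  set e : ℕ → ℝ := fun u => zeroOneLoss πhat astar (trajectory B astar s₀ u)
  have hsteps : ∑ t ∈ range T, stepCost B C πhat s₀ t ≤
      ∑ t ∈ range T, stepCost B C πstar s₀ t + T * ∑ u ∈ range T, e u :=
    calc ∑ t ∈ range T, stepCost B C πhat s₀ t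
        ≤ ∑ t ∈ range T, (stepCost B C πstar s₀ t + ∑ u ∈ range (t + 1), e u) := by
          gcongr with t
          rw [stepCost_pure]
          exact stepCost_le B hC0 hC1 πhat astar s₀ t
      _ ≤ ∑ t ∈ range T, stepCost B C πstar s₀ t + T * ∑ u ∈ range T, e u := by
          rw [sum_add_distrib]
          gcongr
          exact sum_range_sum_range_succ_le (fun u => zeroOneLoss_nonneg _ _ _) T
  rw [globalCost_eq_sum_stepCost, globalCost_eq_sum_stepCost, imitationLoss_eq]
  calc 1 / T * ∑ t ∈ range T, stepCost B C πhat s₀ t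
      ≤ 1 / T * (∑ t ∈ range T, stepCost B C πstar s₀ t + T * ∑ u ∈ range T, e u) := by
        gcongr
    _ = _ := by ring

end

theorem behavioral_cloning_regret_general
    {S A : Type*} [Fintype S] [Fintype A] [DecidableEq S]
    (B : S → A → S) (C : S → A → ℝ)
    (hC0 : ∀ s a, 0 ≤ C s a) (hC1 : ∀ s a, C s a ≤ 1)
    (s₀ : S) (T : ℕ)
    (astar : S → A) (πhat : S → PMF A) (ε : ℝ)
    (hloss :
      (1 / T : ℝ) * ∑ t ∈ Finset.range T, ∑ s : S,
          stateDist B (fun s => PMF.pure (astar s)) s₀ t s *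
            (1 - (πhat s (astar s)).toReal) ≤ ε) :
    globalCost B C πhat s₀ T ≤
      globalCost B C (fun s => PMF.pure (astar s)) s₀ T + (T : ℝ) ^ 2 * ε := by
  have hloss' : imitationLoss B πhat astar s₀ T ≤ ε := hloss
  have hε : 0 ≤ ε := (imitationLoss_nonneg B πhat astar s₀ T).trans hloss'
  have hT : (T : ℝ) ≤ (T : ℝ) ^ 2 := by exact_mod_cast Nat.le_self_pow two_ne_zero T
  calc globalCost B C πhat s₀ T
      ≤ globalCost B C (fun s => PMF.pure (astar s)) s₀ T + T * imitationLoss B πhat astar s₀ T :=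
        globalCost_le_globalCost_pure_add B hC0 hC1 πhat astar s₀ T
    _ ≤ globalCost B C (fun s => PMF.pure (astar s)) s₀ T + T * ε := by gcongr
    _ ≤ globalCost B C (fun s => PMF.pure (astar s)) s₀ T + (T : ℝ) ^ 2 * ε := by gcongr

/-- **Behavioral cloning regret bound** (Ross–Bagnell): if the learner `π̂`'s
time-averaged expected 0-1 loss against a deterministic expert `a*`, measured under
the expert's own state distributions, is at most `ε`, then the learner's global cost
exceeds the expert's by at most `T² ε`. -/
theorem behavioral_cloning_regret
    {S A : Type*} [Fintype S] [Fintype A] [DecidableEq S] [Nonempty S] [Nonempty A]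
    (B : S → A → S) (C : S → A → ℝ)
    (hC0 : ∀ s a, 0 ≤ C s a) (hC1 : ∀ s a, C s a ≤ 1)
    (s₀ : S) (T : ℕ) (hT : 1 ≤ T)
    (astar : S → A) (πhat : S → PMF A) (ε : ℝ)
    (hloss :
      (1 / T : ℝ) * ∑ t ∈ Finset.range T, ∑ s : S,
          stateDist B (fun s => PMF.pure (astar s)) s₀ t s *
            (1 - (πhat s (astar s)).toReal) ≤ ε) :
    globalCost B C πhat s₀ T ≤
      globalCost B C (fun s => PMF.pure (astar s)) s₀ T + (T : ℝ) ^ 2 * ε :=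
  behavioral_cloning_regret_general B C hC0 hC1 s₀ T astar πhat ε hloss
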